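/- arXiv:2407.08051 — 2 statements merged into one kernel-verified Lean document; each statement's English description precedes it below -/
import Mathlib

section
/- The conic (21x² − 22xy + 21y² − 6xz − 6yz + z² = 0) in ℙ² meets the nodal cubic (xyz = x³ + y³) only at the point (1 : 1 : 2), with contact order 6. -/
/-!
STATEMENT 12: The conic (21x² − 22xy + 21y² − 6xz − 6yz + z² = 0) in ℙ² meets the nodal
cubic (xyz = x³ + y³) only at the point (1 : 1 : 2), with contact order 6.

The contact order is computed via the parametrization t ↦ (t : t² : 1 + t³) of the cubic:
the point (1 : 1 : 2) is the parameter t = 1, and the restriction of the conic to the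
cubic is 21t² − 22t³ + 21t⁴ − 6t(1+t³) − 6t²(1+t³) + (1+t³)² = (1 − t)⁶, which has root
multiplicity 6 at t = 1.
-/

open Polynomial

theorem six_tangent_conic {k : Type} [Field k] [IsAlgClosed k] [CharZero k] :
    (∀ x y z : k, (x ≠ 0 ∨ y ≠ 0 ∨ z ≠ 0) → x * y * z = x ^ 3 + y ^ 3 →
      21 * x ^ 2 - 22 * x * y + 21 * y ^ 2 - 6 * x * z - 6 * y * z + z ^ 2 = 0 →
      ∃ lam : k, lam ≠ 0 ∧ x = lam * 1 ∧ y = lam * 1 ∧ z = lam * 2) ∧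
    rootMultiplicity (1 : k)
      (21 * X ^ 2 - 22 * X ^ 3 + 21 * X ^ 4 - 6 * X * (1 + X ^ 3)
        - 6 * X ^ 2 * (1 + X ^ 3) + (1 + X ^ 3) ^ 2 : Polynomial k) = 6 := by
  constructor
  · intro x y z hnz hc hq
    have hx : x ≠ 0 := by
      intro hx0
      subst hx0
      have hy : y = 0 := by
        have h3 : y ^ 3 = 0 := by linear_combination -hc
        exact pow_eq_zero_iff (three_ne_zero) |>.mp h3
      subst hy
      have hz0 : z = 0 := by
        have h2 : z ^ 2 = 0 := by linear_combination hq
        exact pow_eq_zero_iff (two_ne_zero) |>.mp h2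
      subst hz0
      simp at hnz
    have h6 : (x - y) ^ 6 = 0 := by
      linear_combination (x^2*y^2) * hq + (6*x^2*y + 6*x*y^2 - x*y*z - x^3 - y^3) * hc
    have hxy : x = y := sub_eq_zero.mp (pow_eq_zero_iff (by norm_num : (6:ℕ) ≠ 0) |>.mp h6)
    have hz : z = 2 * x := by
      have hx2 : x ^ 2 ≠ 0 := pow_ne_zero _ hx
      refine mul_left_cancel₀ hx2 ?_
      rw [← hxy] at hc
      linear_combination hc
    exact ⟨x, hx, by ring, by linear_combination -hxy, by linear_combination hz⟩
  · have hp : (21 * X ^ 2 - 22 * X ^ 3 + 21 * X ^ 4 - 6 * X * (1 + X ^ 3)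
        - 6 * X ^ 2 * (1 + X ^ 3) + (1 + X ^ 3) ^ 2 : Polynomial k)
        = (X - C 1) ^ 6 := by
      rw [map_one]; ring
    rw [hp, Polynomial.rootMultiplicity_X_sub_C_pow]
end

section
/- The conic (x − y² = 0) (in affine coordinates with z = 1) meets the nodal cubic N = (xyz = x³ + y³) only at the node, with contact orders (5,1) with the two branches. -/
/-!
Eliminating `z` with `xz = y²` turns the cubic into `x³ = 0`, so the conic meets `N` only at the
node. In the chart `z = 1` the branches of `N` are `t ↦ (u, t)` and `t ↦ (t, u)` with `u = t²v`,
`v = 1 + t³v³`; then `u − t² = t⁵v³` and `t − u² = t(1 − t³v²)` with `v³` and `1 − t³v²` units,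
which gives the contact orders `5` and `1`.
-/

open PowerSeries

theorem eq_zero_and_eq_zero_of_nodal_cubic_of_conic {R : Type*} [CommRing R] [IsReduced R]
    {x y z : R} (hN : x * y * z = x ^ 3 + y ^ 3) (hC : x * z = y ^ 2) : x = 0 ∧ y = 0 := by
  have hx : x = 0 := IsReduced.eq_zero x ⟨3, by linear_combination y * hC - hN⟩
  refine ⟨hx, IsReduced.eq_zero y ⟨2, ?_⟩⟩
  rw [← hC, hx, zero_mul]

/-- Modulo `X` the cubic `T³ - T² + X³` is `T²(T - 1)`, so `1` is a simple root that Hensel's lemma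
lifts. -/
theorem exists_pow_three_sub_pow_two_add_X_pow_three_eq_zero (R : Type*) [CommRing R] :
    ∃ b : R⟦X⟧, b ^ 3 - b ^ 2 + PowerSeries.X ^ 3 = 0 ∧ constantCoeff b = 1 := by
  set F : Polynomial R⟦X⟧ :=
    Polynomial.X ^ 3 - Polynomial.X ^ 2 + Polynomial.C (PowerSeries.X ^ 3)
  have hF : F.Monic := by
    unfold F
    monicity!
  have hF1 : F.eval 1 ∈ Ideal.span {(PowerSeries.X : R⟦X⟧)} := by
    simp only [F, Polynomial.eval_add, Polynomial.eval_sub, Polynomial.eval_pow,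
      Polynomial.eval_X, Polynomial.eval_C, one_pow, sub_self, zero_add]
    exact Ideal.pow_mem_of_mem _ (Ideal.mem_span_singleton_self _) 3 three_pos
  have hF'1 : (Polynomial.derivative F).eval 1 = 1 := by
    simp only [F, Polynomial.derivative_add, Polynomial.derivative_sub,
      Polynomial.derivative_X_pow, Polynomial.derivative_C]
    norm_num
  obtain ⟨b, hb, hb1⟩ := HenselianRing.is_henselian F hF 1 hF1 (by simp [hF'1])
  refine ⟨b, by simpa [F] using hb, ?_⟩
  rwa [Ideal.mem_span_singleton, PowerSeries.X_dvd_iff, map_sub, map_one, sub_eq_zero] at hb1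

theorem exists_eq_one_add_X_pow_three_mul_pow_three (R : Type*) [CommRing R] :
    ∃ v : R⟦X⟧, v = 1 + PowerSeries.X ^ 3 * v ^ 3 := by
  obtain ⟨b, hb, hb1⟩ := exists_pow_three_sub_pow_two_add_X_pow_three_eq_zero R
  obtain ⟨w, hwb⟩ := (isUnit_iff_constantCoeff.mpr (by simp [hb1]) : IsUnit b).exists_left_inv
  -- dividing `b³ - b² + X³ = 0` by `b³` gives `1 - w + X³w³ = 0` for `w = b⁻¹`
  exact ⟨w, by linear_combination -w ^ 3 * hb + (w ^ 2 * b ^ 2 + w * b + 1 - w * (w * b + 1)) * hwb⟩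

theorem PowerSeries.order_X_pow_mul_of_isUnit {R : Type*} [Semiring R] [Nontrivial R] {w : R⟦X⟧}
    (hw : IsUnit (constantCoeff w)) (n : ℕ) : (PowerSeries.X ^ n * w).order = (n : ℕ∞) := by
  refine order_eq_nat.mpr ⟨?_, fun i hi => ?_⟩
  · simpa [coeff_X_pow_mul'] using hw.ne_zero
  · simp [coeff_X_pow_mul', hi.not_ge]

theorem conic_through_node_contact {k : Type} [Field k] :
    -- projectively, the conic xz = y² meets N only at the node (0:0:1)
    (∀ x y z : k, (x ≠ 0 ∨ y ≠ 0 ∨ z ≠ 0) → x * y * z = x ^ 3 + y ^ 3 → x * z = y ^ 2 →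
      x = 0 ∧ y = 0 ∧ z ≠ 0) ∧
    -- the two branches of N at the node, and the contact orders (5,1) of the conic
    ∃ u : PowerSeries k,
      u * PowerSeries.X = u ^ 3 + PowerSeries.X ^ 3 ∧
      u.order = 2 ∧
      -- contact order of (x = y²) with the branch (x,y) = (u(t), t)
      (u - PowerSeries.X ^ 2).order = 5 ∧
      -- contact order of (x = y²) with the branch (x,y) = (t, u(t))
      (PowerSeries.X - u ^ 2).order = 1 := by
  refine ⟨fun x y z hxyz hN hC => ?_, ?_⟩
  · obtain ⟨rfl, rfl⟩ := eq_zero_and_eq_zero_of_nodal_cubic_of_conic hN hC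
    exact ⟨rfl, rfl, by simpa using hxyz⟩
  · obtain ⟨v, hv⟩ := exists_eq_one_add_X_pow_three_mul_pow_three k
    have hv1 : constantCoeff v = 1 := by rw [hv]; simp
    refine ⟨PowerSeries.X ^ 2 * v, by linear_combination PowerSeries.X ^ 3 * hv, ?_, ?_, ?_⟩
    · exact order_X_pow_mul_of_isUnit (by simp [hv1]) 2
    · rw [show PowerSeries.X ^ 2 * v - PowerSeries.X ^ 2 = PowerSeries.X ^ 5 * v ^ 3 by
        linear_combination PowerSeries.X ^ 2 * hv]
      exact order_X_pow_mul_of_isUnit (by simp [hv1]) 5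
    · rw [show PowerSeries.X - (PowerSeries.X ^ 2 * v) ^ 2 =
          PowerSeries.X ^ 1 * (1 - PowerSeries.X ^ 3 * v ^ 2) by ring]
      exact order_X_pow_mul_of_isUnit (by simp) 1
end
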